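/- For n ≥ 1, x, y ∈ [0,1], and any real numbers a_0, …, a_{2n} such that Δ²a_k = a_{k+2} − 2a_{k+1} + a_k ≥ 0 for all 0 ≤ k ≤ 2n−2, one has ∑_{i=0}^{n} ∑_{j=0}^{n} p_{n,i}((x+y)/2)·p_{n,j}((x+y)/2)·a_{i+j} ≥ ∑_{i=0}^{n} ∑_{j=0}^{n} p_{n,i}(x)·p_{n,j}(y)·a_{i+j}. -/
import Mathlib


/-- Bernstein basis polynomial `p_{n,ν}(t) = C(n,ν) t^ν (1-t)^{n-ν}`. -/
noncomputable def bp (n ν : ℕ) (t : ℝ) : ℝ := (n.choose ν : ℝ) * t ^ ν * (1 - t) ^ (n - ν)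

open Finset

noncomputable def bsum (n : ℕ) (x y : ℝ) (a : ℕ → ℝ) : ℝ :=
  ∑ i ∈ range (n + 1), ∑ j ∈ range (n + 1), bp n i x * bp n j y * a (i + j)

lemma bp_nonneg {n ν : ℕ} {t : ℝ} (ht : t ∈ Set.Icc (0:ℝ) 1) : 0 ≤ bp n ν t := by
  obtain ⟨h0, h1⟩ := ht
  have h2 : (0:ℝ) ≤ 1 - t := by linarith
  unfold bp
  have := Nat.cast_nonneg (α := ℝ) (n.choose ν)
  positivity

lemma bp_top (n : ℕ) (x : ℝ) : bp n (n+1) x = 0 := by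
  simp [bp, Nat.choose_succ_self]

lemma bp_zero_succ (n : ℕ) (x : ℝ) : bp (n+1) 0 x = (1 - x) * bp n 0 x := by
  simp [bp, pow_succ]
  ring

lemma bp_succ (n i : ℕ) (hi : i ≤ n) (x : ℝ) :
    bp (n+1) (i+1) x = (1-x) * bp n (i+1) x + x * bp n i x := by
  unfold bp
  rcases lt_or_eq_of_le hi with h | h
  · have h1 : n + 1 - (i+1) = n - (i+1) + 1 := by omega
    have h2 : n - i = n - (i+1) + 1 := by omega
    have h3 : (n+1).choose (i+1) = n.choose i + n.choose (i+1) := Nat.choose_succ_succ n i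
    rw [h1, h2, h3]
    push_cast
    ring
  · subst h
    simp [Nat.choose_succ_self, Nat.choose_self]
    ring

lemma split (n : ℕ) (x : ℝ) (c : ℕ → ℝ) :
    ∑ i ∈ range (n + 2), bp (n+1) i x * c i
      = ∑ i ∈ range (n + 1), bp n i x * ((1 - x) * c i + x * c (i + 1)) := by
  rw [Finset.sum_range_succ' (fun i => bp (n+1) i x * c i) (n+1)]
  have e1 : ∀ i ∈ range (n+1), bp (n+1) (i+1) x * c (i+1)
      = (1-x) * (bp n (i+1) x * c (i+1)) + x * bp n i x * c (i+1) := by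
    intro i hi
    rw [bp_succ n i (by simpa [Nat.lt_succ_iff] using hi)]
    ring
  rw [Finset.sum_congr rfl e1, Finset.sum_add_distrib]
  have e3 : (∑ i ∈ range (n+1), (1-x) * (bp n (i+1) x * c (i+1))) + bp (n+1) 0 x * c 0
      = ∑ i ∈ range (n+1), (1-x) * (bp n i x * c i) := by
    rw [bp_zero_succ]
    have h4 : bp (n+1) 0 x * c 0 = (1-x) * (bp n 0 x * c 0) := by rw [bp_zero_succ]; ring
    calc (∑ i ∈ range (n+1), (1-x) * (bp n (i+1) x * c (i+1))) + (1-x) * bp n 0 x * c 0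
        = ∑ i ∈ range (n+2), (1-x) * (bp n i x * c i) := by
          rw [Finset.sum_range_succ' (fun i => (1-x) * (bp n i x * c i)) (n+1)]
          ring
      _ = (∑ i ∈ range (n+1), (1-x) * (bp n i x * c i))
            + (1-x) * (bp n (n+1) x * c (n+1)) := by
          rw [Finset.sum_range_succ]
      _ = ∑ i ∈ range (n+1), (1-x) * (bp n i x * c i) := by
          rw [bp_top]; ring
  calc (∑ i ∈ range (n+1), (1-x) * (bp n (i+1) x * c (i+1)))
        + (∑ i ∈ range (n+1), x * bp n i x * c (i+1)) + bp (n+1) 0 x * c 0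
      = ((∑ i ∈ range (n+1), (1-x) * (bp n (i+1) x * c (i+1))) + bp (n+1) 0 x * c 0)
        + ∑ i ∈ range (n+1), x * bp n i x * c (i+1) := by ring
    _ = (∑ i ∈ range (n+1), (1-x) * (bp n i x * c i))
        + ∑ i ∈ range (n+1), x * bp n i x * c (i+1) := by rw [e3]
    _ = ∑ i ∈ range (n+1), bp n i x * ((1 - x) * c i + x * c (i + 1)) := by
        rw [← Finset.sum_add_distrib]
        exact Finset.sum_congr rfl (fun i _ => by ring)

lemma bsum_succ (n : ℕ) (x y : ℝ) (a : ℕ → ℝ) :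
    bsum (n+1) x y a = bsum n x y (fun k =>
      (1-x)*(1-y) * a k + ((1-x)*y + x*(1-y)) * a (k+1) + x*y * a (k+2)) := by
  unfold bsum
  have h1 : ∀ i, ∑ j ∈ range (n+1+1), bp (n+1) i x * bp (n+1) j y * a (i+j)
      = ∑ j ∈ range (n+1), bp n j y * (bp (n+1) i x * ((1-y) * a (i+j) + y * a (i+j+1))) := by
    intro i
    have := split n y (fun j => bp (n+1) i x * a (i+j))
    calc ∑ j ∈ range (n+1+1), bp (n+1) i x * bp (n+1) j y * a (i+j)
        = ∑ j ∈ range (n+2), bp (n+1) j y * (bp (n+1) i x * a (i+j)) := by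
          exact Finset.sum_congr rfl (fun j _ => by ring)
      _ = ∑ j ∈ range (n+1), bp n j y * ((1-y) * (bp (n+1) i x * a (i+j))
            + y * (bp (n+1) i x * a (i+(j+1)))) := split n y (fun j => bp (n+1) i x * a (i+j))
      _ = ∑ j ∈ range (n+1), bp n j y * (bp (n+1) i x * ((1-y) * a (i+j) + y * a (i+j+1))) := by
          exact Finset.sum_congr rfl (fun j _ => by ring_nf)
  rw [Finset.sum_congr rfl (fun i _ => h1 i), Finset.sum_comm]
  have h2 : ∀ j ∈ range (n+1), ∑ i ∈ range (n+1+1), bp n j y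
        * (bp (n+1) i x * ((1-y) * a (i+j) + y * a (i+j+1)))
      = ∑ i ∈ range (n+1), bp n i x * (bp n j y *
          ((1-x)*(1-y) * a (i+j) + ((1-x)*y + x*(1-y)) * a (i+j+1) + x*y * a (i+j+2))) := by
    intro j _
    calc ∑ i ∈ range (n+1+1), bp n j y * (bp (n+1) i x * ((1-y) * a (i+j) + y * a (i+j+1)))
        = ∑ i ∈ range (n+2), bp (n+1) i x * (bp n j y * ((1-y) * a (i+j) + y * a (i+j+1))) := by
          exact Finset.sum_congr rfl (fun i _ => by ring)
      _ = ∑ i ∈ range (n+1), bp n i x * ((1-x) * (bp n j y * ((1-y) * a (i+j) + y * a (i+j+1)))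
            + x * (bp n j y * ((1-y) * a (i+1+j) + y * a (i+1+j+1)))) :=
          split n x (fun i => bp n j y * ((1-y) * a (i+j) + y * a (i+j+1)))
      _ = _ := by
          refine Finset.sum_congr rfl (fun i _ => ?_)
          have e2 : i+j+1+1 = i+j+2 := rfl
          rw [e2]
          ring_nf
  rw [Finset.sum_congr rfl h2, Finset.sum_comm]
  exact Finset.sum_congr rfl fun i _ => Finset.sum_congr rfl fun j _ => by simp only []; ring

lemma key (x y : ℝ) (hx : x ∈ Set.Icc (0:ℝ) 1) (hy : y ∈ Set.Icc (0:ℝ) 1) :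
    ∀ n : ℕ, ∀ a : ℕ → ℝ, (∀ k, k + 2 ≤ 2*n → 0 ≤ a (k+2) - 2*a (k+1) + a k) →
    bsum n ((x+y)/2) ((x+y)/2) a ≥ bsum n x y a := by
  obtain ⟨hx0, hx1⟩ := hx
  obtain ⟨hy0, hy1⟩ := hy
  have hm0 : (0:ℝ) ≤ (x+y)/2 := by linarith
  have hm1 : (x+y)/2 ≤ 1 := by linarith
  intro n
  induction n with
  | zero =>
    intro a _
    simp [bsum, bp]
  | succ n ih =>
    intro a ha
    set m : ℝ := (x+y)/2 with hm
    set b : ℕ → ℝ := fun k =>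
      (1-m)*(1-m) * a k + ((1-m)*m + m*(1-m)) * a (k+1) + m*m * a (k+2) with hb
    set bxy : ℕ → ℝ := fun k =>
      (1-x)*(1-y) * a k + ((1-x)*y + x*(1-y)) * a (k+1) + x*y * a (k+2) with hbxy
    have h1 : bsum (n+1) m m a = bsum n m m b := bsum_succ n m m a
    have h2 : bsum (n+1) x y a = bsum n x y bxy := bsum_succ n x y a
    have hbconv : ∀ k, k + 2 ≤ 2*n → 0 ≤ b (k+2) - 2*b (k+1) + b k := by
      intro k hk
      have d0 := ha k (by omega)
      have d1 := ha (k+1) (by omega)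
      have d2 := ha (k+2) (by omega)
      have c0 : (0:ℝ) ≤ (1-m)*(1-m) := by nlinarith
      have c1 : (0:ℝ) ≤ m*(1-m) := by nlinarith
      have c2 : (0:ℝ) ≤ m*m := by nlinarith
      have : b (k+2) - 2*b (k+1) + b k
          = (1-m)*(1-m) * (a (k+2) - 2*a (k+1) + a k)
            + 2*(m*(1-m)) * (a (k+3) - 2*a (k+2) + a (k+1))
            + m*m * (a (k+4) - 2*a (k+3) + a (k+2)) := by
        simp only [hb]
        ring_nf
      rw [this]
      have t3 : a (k+3) - 2*a (k+2) + a (k+1) = a (k+1+2) - 2*a (k+1+1) + a (k+1) := rfl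
      have t4 : a (k+4) - 2*a (k+3) + a (k+2) = a (k+2+2) - 2*a (k+2+1) + a (k+2) := rfl
      rw [t3, t4]
      have := mul_nonneg c0 d0
      have := mul_nonneg (by linarith : (0:ℝ) ≤ 2*(m*(1-m))) d1
      have := mul_nonneg c2 d2
      linarith
    have step1 : bsum n m m b ≥ bsum n x y b := ih b hbconv
    have step2 : bsum n x y b ≥ bsum n x y bxy := by
      rw [ge_iff_le, ← sub_nonneg]
      unfold bsum
      rw [← Finset.sum_sub_distrib]
      apply Finset.sum_nonneg
      intro i hi
      rw [← Finset.sum_sub_distrib]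
      apply Finset.sum_nonneg
      intro j hj
      have hij : i + j + 2 ≤ 2*(n+1) := by
        simp only [Finset.mem_range] at hi hj
        omega
      have hd := ha (i+j) hij
      have hdiff : b (i+j) - bxy (i+j)
          = ((x-y)/2)^2 * (a (i+j+2) - 2*a (i+j+1) + a (i+j)) := by
        simp only [hb, hbxy, hm]
        ring
      have : bp n i x * bp n j y * b (i+j) - bp n i x * bp n j y * bxy (i+j)
          = bp n i x * bp n j y * (b (i+j) - bxy (i+j)) := by ring
      rw [this, hdiff]
      have hbx : 0 ≤ bp n i x := bp_nonneg ⟨hx0, hx1⟩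
      have hby : 0 ≤ bp n j y := bp_nonneg ⟨hy0, hy1⟩
      have hsq : (0:ℝ) ≤ ((x-y)/2)^2 := sq_nonneg _
      positivity
    linarith

theorem stmt_11 (n : ℕ) (hn : 1 ≤ n) (x y : ℝ)
    (hx : x ∈ Set.Icc (0 : ℝ) 1) (hy : y ∈ Set.Icc (0 : ℝ) 1)
    (a : ℕ → ℝ) (ha : ∀ k ≤ 2 * n - 2, 0 ≤ a (k + 2) - 2 * a (k + 1) + a k) :
    ∑ i ∈ Finset.range (n + 1), ∑ j ∈ Finset.range (n + 1),
        bp n i ((x + y) / 2) * bp n j ((x + y) / 2) * a (i + j) ≥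
      ∑ i ∈ Finset.range (n + 1), ∑ j ∈ Finset.range (n + 1),
        bp n i x * bp n j y * a (i + j) := by
  have := key x y hx hy n a (fun k hk => ha k (by omega))
  simpa [bsum] using this
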